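/- arXiv:1312.3401 — 6 statements merged into one kernel-verified Lean document; each statement's English description precedes it below -/
import Mathlib

section
/- Let G be a graph and X, S subsets of V(G) such that no connected component of G - X contains more than half of the vertices of S - X. Then the components of G - X can be partitioned into at most three parts such that no part contains more than half the vertices of S - X. -/
open SimpleGraph

namespace TWPaper

/-- `(T, B)` is a tree decomposition of `G`. -/
def IsTreeDecomp {V ι : Type*} (G : SimpleGraph V) (T : SimpleGraph ι) (B : ι → Set V) : Prop :=
  T.IsTree ∧
  (∀ v w : V, G.Adj v w → ∃ x, v ∈ B x ∧ w ∈ B x) ∧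
  (∀ v : V, (T.induce {x | v ∈ B x}).Connected)

/-- `G` has a tree decomposition of width at most `k`. -/
def HasTDWidthLE {V : Type*} (G : SimpleGraph V) (k : ℕ) : Prop :=
  ∃ (ι : Type) (T : SimpleGraph ι) (B : ι → Set V),
    IsTreeDecomp G T B ∧ ∀ x, (B x).ncard ≤ k + 1

/-- Treewidth of `G`. -/
noncomputable def treewidth {V : Type*} (G : SimpleGraph V) : ℕ :=
  sInf {k | HasTDWidthLE G k}

/-- Two vertex sets touch: they intersect or an edge joins them. -/
def Touches {V : Type*} (G : SimpleGraph V) (A B : Set V) : Prop :=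
  (A ∩ B).Nonempty ∨ ∃ a ∈ A, ∃ b ∈ B, G.Adj a b

/-- A bramble: a set of connected subgraphs (given by vertex sets) that pairwise touch. -/
def IsBramble {V : Type*} (G : SimpleGraph V) (𝓑 : Set (Set V)) : Prop :=
  (∀ A ∈ 𝓑, (G.induce A).Connected) ∧ ∀ A ∈ 𝓑, ∀ B ∈ 𝓑, Touches G A B

/-- `S` hits every element of `𝓑`. -/
def IsHitting {V : Type*} (𝓑 : Set (Set V)) (S : Set V) : Prop :=
  ∀ A ∈ 𝓑, (S ∩ A).Nonempty

/-- The order of a bramble: minimum size of a hitting set. -/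
noncomputable def brambleOrder {V : Type*} (𝓑 : Set (Set V)) : ℕ :=
  sInf {n | ∃ S : Set V, IsHitting 𝓑 S ∧ S.ncard = n}

/-- The bramble number: maximum order of a bramble. -/
noncomputable def brambleNumber {V : Type*} (G : SimpleGraph V) : ℕ :=
  sSup {n | ∃ 𝓑 : Set (Set V), IsBramble G 𝓑 ∧ brambleOrder 𝓑 = n}

/-- A tangle: connected subgraphs such that any three share a vertex or
meet a common edge's endpoints. -/
def IsTangle {V : Type*} (G : SimpleGraph V) (τ : Set (Set V)) : Prop :=
  (∀ A ∈ τ, (G.induce A).Connected) ∧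
  ∀ A ∈ τ, ∀ B ∈ τ, ∀ C ∈ τ,
    (∃ v, v ∈ A ∩ B ∩ C) ∨
    ∃ u v, G.Adj u v ∧ (u ∈ A ∨ v ∈ A) ∧ (u ∈ B ∨ v ∈ B) ∧ (u ∈ C ∨ v ∈ C)

/-- The tangle number: maximum order of a tangle. -/
noncomputable def tangleNumber {V : Type*} (G : SimpleGraph V) : ℕ :=
  sSup {n | ∃ τ : Set (Set V), IsTangle G τ ∧ brambleOrder τ = n}

/-- `G - X` : delete the vertices of `X` (kept on the same vertex type,
vertices of `X` become isolated). -/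
def delVerts {V : Type*} (G : SimpleGraph V) (X : Set V) : SimpleGraph V where
  Adj a b := G.Adj a b ∧ a ∉ X ∧ b ∉ X
  symm := by
    constructor
    intro a b h
    exact ⟨h.1.symm, h.2.2, h.2.1⟩
  loopless := by
    constructor
    intro a h
    exact G.loopless.irrefl a h.1

/-- The vertex set of the component of `G - X` containing `v`. -/
def comp {V : Type*} (G : SimpleGraph V) (X : Set V) (v : V) : Set V :=
  {w | (delVerts G X).Reachable v w}

/-- `X` is a `(k, S, c)`-separator of `G`. -/
def IsSeparator {V : Type*} (G : SimpleGraph V) (k : ℕ) (S : Set V) (c : ℝ) (X : Set V) : Prop :=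
  X.ncard ≤ k ∧
  ∀ v ∉ X, ((comp G X v ∩ S).ncard : ℝ) ≤ c * ((S \ X).ncard : ℝ)

/-- The separation number `sep_c(G)`. -/
noncomputable def sepNum {V : Type*} (G : SimpleGraph V) (c : ℝ) : ℕ :=
  sInf {k | ∀ S : Set V, ∃ X : Set V, IsSeparator G k S c X}

/-- `X` is a `(k, S, c)*`-separator of `G`. -/
def IsStarSeparator {V : Type*} (G : SimpleGraph V) (k : ℕ) (S : Set V) (c : ℝ) (X : Set V) :
    Prop :=
  X.ncard ≤ k ∧
  ∀ v ∉ X, ((comp G X v ∩ (S \ X)).ncard : ℝ) ≤ c * (S.ncard : ℝ)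

/-- The variant separation number `sep*_c(G)`. -/
noncomputable def sepStarNum {V : Type*} (G : SimpleGraph V) (c : ℝ) : ℕ :=
  sInf {k | ∀ S : Set V, ∃ X : Set V, IsStarSeparator G k S c X}

/-- `G` has a branch decomposition of width at most `w`. -/
def HasBDWidthLE {V : Type*} (G : SimpleGraph V) (w : ℕ) : Prop :=
  ∃ (ι : Type) (_ : Finite ι) (T : SimpleGraph ι), T.IsTree ∧
    (∀ x : ι, (T.neighborSet x).ncard = 3 ∨ (T.neighborSet x).ncard = 1) ∧
    ∃ θ : G.edgeSet ≃ {x : ι // (T.neighborSet x).ncard = 1},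
      ∀ a b : ι, T.Adj a b →
        {v : V | ∃ e₁ e₂ : G.edgeSet, v ∈ e₁.1 ∧ v ∈ e₂.1 ∧
          ¬ (T.deleteEdges {s(a, b)}).Reachable (θ e₁).1 (θ e₂).1}.ncard ≤ w

/-- Branchwidth of `G` (`0` if no branch decomposition exists). -/
noncomputable def branchwidth {V : Type*} (G : SimpleGraph V) : ℕ :=
  sInf {w | HasBDWidthLE G w}

/-- `H` is a minor of `G`, via a model of branch sets. -/
def IsMinor {W V : Type*} (H : SimpleGraph W) (G : SimpleGraph V) : Prop :=
  ∃ f : W → Set V,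
    (∀ w, (G.induce (f w)).Connected) ∧
    (∀ a b, a ≠ b → Disjoint (f a) (f b)) ∧
    ∀ a b, H.Adj a b → ∃ u ∈ f a, ∃ v ∈ f b, G.Adj u v

/-- The lexicographic product `T[K_k]`. -/
def treeLex {ι : Type*} (T : SimpleGraph ι) (k : ℕ) : SimpleGraph (ι × Fin k) where
  Adj a b := T.Adj a.1 b.1 ∨ (a.1 = b.1 ∧ a.2 ≠ b.2)
  symm := by
    constructor
    rintro a b (h | ⟨h1, h2⟩)
    · exact Or.inl h.symm
    · exact Or.inr ⟨h1.symm, h2.symm⟩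
  loopless := by
    constructor
    rintro a (h | ⟨h1, h2⟩)
    · exact T.loopless.irrefl _ h
    · exact h2 rfl

/-- The lexicographic tree product number. -/
noncomputable def ltp {V : Type*} (G : SimpleGraph V) : ℕ :=
  sInf {k | ∃ (ι : Type) (T : SimpleGraph ι), T.IsTree ∧ IsMinor G (treeLex T k)}

/-- The cartesian tree product number. -/
noncomputable def ctp {V : Type*} (G : SimpleGraph V) : ℕ :=
  sInf {k | ∃ (ι : Type) (T : SimpleGraph ι), T.IsTree ∧
    IsMinor G (T.boxProd (completeGraph (Fin k)))}

/-- `S` is `k`-linked in `G`. -/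
def IsLinked {V : Type*} (G : SimpleGraph V) (k : ℕ) (S : Set V) : Prop :=
  ∀ X : Set V, X.ncard < k → ∃ v, v ∉ X ∧ S.ncard < 2 * (comp G X v ∩ S).ncard

/-- The linkedness of `G`: maximum `k ≥ 1` for which `G` has a `k`-linked set. -/
noncomputable def linkedness {V : Type*} (G : SimpleGraph V) : ℕ :=
  sSup {k | 0 < k ∧ ∃ S : Set V, IsLinked G k S}

/-- `S` is well-linked in `G`. -/
def WellLinked {V : Type*} (G : SimpleGraph V) (S : Set V) : Prop :=
  ∀ A B : Finset V, ↑A ⊆ S → ↑B ⊆ S → A.card = B.card →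
    ∃ (σ : A ≃ B) (p : ∀ a : A, G.Walk (a : V) ((σ a : V))),
      (∀ a, (p a).IsPath) ∧
      ∀ a a' : A, a ≠ a' → ∀ v, v ∈ (p a).support → v ∉ (p a').support

/-- `S` is externally-well-linked in `G`: the linking paths can be chosen with
no internal vertices in `S`. -/
def ExternallyWellLinked {V : Type*} (G : SimpleGraph V) (S : Set V) : Prop :=
  ∀ A B : Finset V, ↑A ⊆ S → ↑B ⊆ S → A.card = B.card →
    ∃ (σ : A ≃ B) (p : ∀ a : A, G.Walk (a : V) ((σ a : V))),
      (∀ a, (p a).IsPath) ∧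
      (∀ a a' : A, a ≠ a' → ∀ v, v ∈ (p a).support → v ∉ (p a').support) ∧
      ∀ a : A, ∀ v ∈ (p a).support, v ∈ S → v = (a : V) ∨ v = ((σ a : V))

/-- The well-linked number of `G`. -/
noncomputable def wellLinkedNum {V : Type*} (G : SimpleGraph V) : ℕ :=
  sSup {n | ∃ S : Set V, WellLinked G S ∧ S.ncard = n}

/-- A graph is chordal if every cycle of length at least 4 has a chord
(equivalently, there is no induced cycle of length at least four). -/
def Chordal {V : Type*} (H : SimpleGraph V) : Prop :=
  ∀ (v : V) (c : H.Walk v v), c.IsCycle → 4 ≤ c.length →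
    ∃ a b, a ∈ c.support ∧ b ∈ c.support ∧ H.Adj a b ∧ s(a, b) ∉ c.edges

/-- `G` is a `k`-tree. -/
inductive IsKTree (k : ℕ) : ∀ (V : Type), SimpleGraph V → Prop
  | base (V : Type) (G : SimpleGraph V) (h : Nonempty (G ≃g completeGraph (Fin (k + 1)))) :
      IsKTree k V G
  | step (V : Type) (G : SimpleGraph V) (v : V)
      (hdeg : (G.neighborSet v).ncard = k)
      (hcl : G.IsClique (G.neighborSet v))
      (h : IsKTree k ↥{u : V | u ≠ v} (G.induce {u : V | u ≠ v})) :
      IsKTree k V G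

/-- The `k × k` grid graph. -/
def grid (k : ℕ) : SimpleGraph (Fin k × Fin k) where
  Adj a b := (a.1 = b.1 ∧ (a.2.val + 1 = b.2.val ∨ b.2.val + 1 = a.2.val)) ∨
             (a.2 = b.2 ∧ (a.1.val + 1 = b.1.val ∨ b.1.val + 1 = a.1.val))
  symm := by
    constructor
    rintro a b (⟨h1, h2⟩ | ⟨h1, h2⟩)
    · exact Or.inl ⟨h1.symm, h2.symm⟩
    · exact Or.inr ⟨h1.symm, h2.symm⟩
  loopless := by
    constructor
    rintro a (⟨h1, h2⟩ | ⟨h1, h2⟩) <;> omega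

section

open Finset

/-- A heaviest subset of `u` of at most half the weight leaves at most half the weight behind:
otherwise adding any remaining element to it would exceed half, yet that element weighs at
most `m`, and `u` together with `m` weighs at most `n`. -/
theorem exists_subset_two_mul_sum_le_and_sdiff {α : Type*} [DecidableEq α] (u : Finset α)
    (w : α → ℕ) {m n : ℕ} (hle : ∀ x ∈ u, w x ≤ m) (hsum : ∑ x ∈ u, w x + m ≤ n) :
    ∃ t ⊆ u, 2 * ∑ x ∈ t, w x ≤ n ∧ 2 * ∑ x ∈ u \ t, w x ≤ n := by
  obtain ⟨t, htP, htmax⟩ := (u.powerset.filter fun t => 2 * ∑ x ∈ t, w x ≤ n).exists_max_image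
    (fun t => ∑ x ∈ t, w x) ⟨∅, by simp⟩
  rw [mem_filter, mem_powerset] at htP
  obtain ⟨htu, ht⟩ := htP
  refine ⟨t, htu, ht, ?_⟩
  by_contra! hrest
  have hsplit := sum_sdiff (f := w) htu
  obtain ⟨c, hc, hwc⟩ := exists_ne_zero_of_sum_ne_zero (s := u \ t) (f := w) (by omega)
  obtain ⟨hcu, hct⟩ := mem_sdiff.1 hc
  have hinsert : n < 2 * (w c + ∑ x ∈ t, w x) := by
    by_contra! hno
    have hmax := htmax (insert c t) (mem_filter.2 ⟨mem_powerset.2 (insert_subset hcu htu),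
      by rwa [sum_insert hct]⟩)
    rw [sum_insert hct] at hmax
    omega
  have hcm := hle c hcu
  omega

/-- Put a heaviest element in the first part and split the rest in two as above. -/
theorem exists_fin_three_coloring_two_mul_sum_le {α : Type*} (s : Finset α) (w : α → ℕ)
    (hw : ∀ a ∈ s, 2 * w a ≤ ∑ x ∈ s, w x) :
    ∃ g : α → Fin 3, ∀ i, 2 * ∑ x ∈ s with g x = i, w x ≤ ∑ x ∈ s, w x := by
  classical
  rcases s.eq_empty_or_nonempty with rfl | hs
  · exact ⟨0, fun i => by simp⟩
  obtain ⟨a, ha, hamax⟩ := s.exists_max_image w hs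
  obtain ⟨t, hts, ht, hrest⟩ := exists_subset_two_mul_sum_le_and_sdiff (s.erase a) w
    (fun x hx => hamax x (mem_of_mem_erase hx)) (sum_erase_add s w ha).le
  let g : α → Fin 3 := fun x => if x = a then 0 else if x ∈ t then 1 else 2
  have hpart : ∀ i, ∃ B : Finset α, {x ∈ s | g x = i} ⊆ B ∧ 2 * ∑ x ∈ B, w x ≤ ∑ x ∈ s, w x := by
    intro i
    fin_cases i
    · refine ⟨{a}, fun x hx => ?_, by simpa using hw a ha⟩
      simp only [mem_filter, g] at hx
      split_ifs at hx <;> simp_all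
    · refine ⟨t, fun x hx => ?_, ht⟩
      simp only [mem_filter, g] at hx
      split_ifs at hx <;> simp_all
    · refine ⟨s.erase a \ t, fun x hx => ?_, hrest⟩
      simp only [mem_filter, g] at hx
      split_ifs at hx <;> simp_all
  refine ⟨g, fun i => ?_⟩
  obtain ⟨B, hsub, hB⟩ := hpart i
  exact (Nat.mul_le_mul_left 2 (sum_le_sum_of_subset hsub)).trans hB

theorem exists_fin_three_coloring_two_mul_card_filter_le {α β : Type*} [DecidableEq α]
    (T : Finset β) (π : β → α) (h : ∀ b ∈ T, 2 * #{x ∈ T | π x = π b} ≤ #T) :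
    ∃ g : α → Fin 3, ∀ i, 2 * #{x ∈ T | g (π x) = i} ≤ #T := by
  have htotal := card_eq_sum_card_image π T
  obtain ⟨g, hg⟩ := exists_fin_three_coloring_two_mul_sum_le (T.image π)
    (fun q => #{x ∈ T | π x = q}) (by
      rintro _ hq
      obtain ⟨b, hb, rfl⟩ := mem_image.1 hq
      rw [← htotal]
      exact h b hb)
  refine ⟨g, fun i => ?_⟩
  have hclass : #{x ∈ T | g (π x) = i} ≤ ∑ q ∈ T.image π with g q = i, #{x ∈ T | π x = q} := by
    rw [card_eq_sum_card_fiberwise (f := π) (t := {q ∈ T.image π | g q = i}) (by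
      intro x hx
      simp only [coe_filter, Set.mem_ofPred_eq] at hx
      simpa [hx.2] using ⟨x, hx.1, rfl⟩)]
    exact sum_le_sum fun q _ => card_le_card (filter_subset_filter _ (filter_subset _ _))
  exact (Nat.mul_le_mul_left 2 hclass).trans (htotal ▸ hg i)

end

theorem comp_eq_setOf_connectedComponentMk_eq {V : Type*} (G : SimpleGraph V) (X : Set V)
    (v : V) : comp G X v = {w | (delVerts G X).connectedComponentMk w =
      (delVerts G X).connectedComponentMk v} := by
  ext w
  simp only [comp, Set.mem_ofPred_eq, ConnectedComponent.eq]
  exact ⟨Reachable.symm, Reachable.symm⟩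

/-- if no component of `G - X` contains more than half of `S - X`,
the components can be partitioned into at most three parts, none containing
more than half of `S - X`. -/
theorem partition_components_three {V : Type} [Fintype V] (G : SimpleGraph V)
    (X S : Set V)
    (h : ∀ v ∉ X, 2 * (comp G X v ∩ (S \ X)).ncard ≤ (S \ X).ncard) :
    ∃ f : V → Fin 3,
      (∀ a b, (delVerts G X).Reachable a b → f a = f b) ∧
      ∀ i : Fin 3, 2 * ((S \ X) ∩ f ⁻¹' {i}).ncard ≤ (S \ X).ncard := by
  classical
  set cm := (delVerts G X).connectedComponentMk
  set T := (S \ X).toFinset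
  have hcardT : (S \ X).ncard = T.card := Set.ncard_eq_toFinset_card' _
  obtain ⟨g, hg⟩ := exists_fin_three_coloring_two_mul_card_filter_le T cm (by
    intro v hv
    have hvX : v ∉ X := (Set.mem_toFinset.1 hv).2
    have hfiber : comp G X v ∩ (S \ X) = ↑{x ∈ T | cm x = cm v} := by
      ext x
      simp [comp_eq_setOf_connectedComponentMk_eq, T, cm, and_comm]
    rw [← hcardT, ← Set.ncard_coe_finset, ← hfiber]
    exact h v hvX)
  refine ⟨fun v => g (cm v), fun a b hab => congrArg g (ConnectedComponent.sound hab), fun i => ?_⟩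
  have hclass : (S \ X) ∩ (fun v => g (cm v)) ⁻¹' {i} = ↑{x ∈ T | g (cm x) = i} := by
    ext x
    simp [T]
  rw [hclass, Set.ncard_coe_finset, hcardT]
  exact hg i

end TWPaper
end

section
/- For every graph G, the tangle number satisfies tn(G) <= bn(G) <= 2·tn(G). -/
open SimpleGraph

namespace TWPaper

/-!
Every tangle is a bramble, which gives `tn ≤ bn`. Conversely, let `𝓑` be a bramble of order
`b` and `k = ⌈b / 2⌉`. For every `X` with `|X| < k` some element of `𝓑` avoids `X`, and all
elements of `𝓑` avoiding `X` lie in a single component of `G - X`. These components form a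
tangle: for three of them, cut by `X`, `Y`, `Z`, pick `B₁ ∈ 𝓑` avoiding `X ∪ Y`
(`|X ∪ Y| < b`) and `B₂ ∈ 𝓑` avoiding `Z`; the vertex or edge where `B₁` and `B₂` touch is
shared by the three components. A set of fewer than `k` vertices misses the component it
cuts off, so the tangle has order at least `k`.
-/

section Components

variable {V : Type*} {G : SimpleGraph V} {X A B : Set V} {v w : V}

lemma delVerts_le : delVerts G X ≤ G := fun _ _ h => h.1

lemma mem_comp_self : v ∈ comp G X v := Reachable.refl v

lemma comp_eq_supp : comp G X v = ((delVerts G X).connectedComponentMk v).supp := by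
  ext w
  rw [ConnectedComponent.mem_supp_iff, ConnectedComponent.eq]
  exact ⟨Reachable.symm, Reachable.symm⟩

lemma induce_comp_connected : (G.induce (comp G X v)).Connected := by
  rw [comp_eq_supp]
  exact (ConnectedComponent.maximal_connected_induce_supp _).1.mono
    (comap_monotone _ delVerts_le)

lemma notMem_of_mem_comp (hv : v ∉ X) (hw : w ∈ comp G X v) : w ∉ X := by
  obtain ⟨p⟩ := hw
  rcases p.reverse with _ | ⟨hadj, -⟩
  · exact hv
  · exact hadj.2.1

lemma subset_comp_of_connected (hA : (G.induce A).Connected) (hAX : Disjoint A X)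
    (hv : v ∈ A) : A ⊆ comp G X v := by
  let φ : G.induce A →g delVerts G X :=
    ⟨Subtype.val, fun {a b} hab =>
      ⟨hab, Set.disjoint_left.mp hAX a.2, Set.disjoint_left.mp hAX b.2⟩⟩
  exact fun w hw => (hA.preconnected ⟨v, hv⟩ ⟨w, hw⟩).map φ

lemma subset_comp_of_touches (hA : (G.induce A).Connected) (hB : (G.induce B).Connected)
    (hAX : Disjoint A X) (hBX : Disjoint B X) (hAB : Touches G A B) (hv : v ∈ A) :
    B ⊆ comp G X v := by
  intro w hw
  rcases hAB with ⟨u, huA, huB⟩ | ⟨a, ha, b, hb, hab⟩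
  · exact (subset_comp_of_connected hA hAX hv huA).trans
      (subset_comp_of_connected hB hBX huB hw)
  · have hab' : (delVerts G X).Adj a b :=
      ⟨hab, Set.disjoint_left.mp hAX ha, Set.disjoint_left.mp hBX hb⟩
    exact ((subset_comp_of_connected hA hAX hv ha).trans hab'.reachable).trans
      (subset_comp_of_connected hB hBX hb hw)

end Components

section Order

variable {V : Type*} {𝓑 : Set (Set V)} {S : Set V}

lemma IsHitting.mono {T : Set V} (hS : IsHitting 𝓑 S) (hST : S ⊆ T) : IsHitting 𝓑 T :=
  fun A hA => (hS A hA).mono (Set.inter_subset_inter_left A hST)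

lemma brambleOrder_le_ncard (hS : IsHitting 𝓑 S) : brambleOrder 𝓑 ≤ S.ncard :=
  Nat.sInf_le ⟨S, hS, rfl⟩

lemma le_brambleOrder {k : ℕ} (hS : IsHitting 𝓑 S) (h : ∀ T, IsHitting 𝓑 T → k ≤ T.ncard) :
    k ≤ brambleOrder 𝓑 :=
  le_csInf ⟨_, S, hS, rfl⟩ fun _ ⟨T, hT, hTn⟩ => hTn ▸ h T hT

lemma brambleOrder_empty : brambleOrder (∅ : Set (Set V)) = 0 :=
  Nat.eq_zero_of_le_zero <|
    (brambleOrder_le_ncard fun _ h => h.elim).trans_eq (Set.ncard_empty V)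

lemma brambleOrder_le_card [Finite V] (𝓑 : Set (Set V)) : brambleOrder 𝓑 ≤ Nat.card V := by
  rcases Set.eq_empty_or_nonempty {n | ∃ S : Set V, IsHitting 𝓑 S ∧ S.ncard = n}
    with h | ⟨_, S, hS, -⟩
  · simp [brambleOrder, h]
  · rw [← Set.ncard_univ]
    exact brambleOrder_le_ncard (hS.mono (Set.subset_univ S))

lemma exists_disjoint_of_ncard_lt_brambleOrder (hS : S.ncard < brambleOrder 𝓑) :
    ∃ A ∈ 𝓑, Disjoint A S := by
  by_contra! h
  refine (brambleOrder_le_ncard (S := S) fun A hA => ?_).not_gt hS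
  rw [Set.inter_comm]
  exact Set.not_disjoint_iff_nonempty_inter.mp (h A hA)

lemma bddAbove_brambleOrder [Finite V] (P : Set (Set V) → Prop) :
    BddAbove {n | ∃ 𝓑 : Set (Set V), P 𝓑 ∧ brambleOrder 𝓑 = n} :=
  ⟨Nat.card V, fun _ ⟨𝓑, _, h𝓑⟩ => h𝓑 ▸ brambleOrder_le_card 𝓑⟩

end Order

section Tangle

variable {V : Type*} {G : SimpleGraph V}

lemma isTangle_empty : IsTangle G ∅ := ⟨fun _ h => h.elim, fun _ h => h.elim⟩

lemma IsTangle.isBramble {τ : Set (Set V)} (hτ : IsTangle G τ) : IsBramble G τ := by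
  refine ⟨hτ.1, fun A hA B hB => ?_⟩
  rcases hτ.2 A hA B hB B hB with ⟨v, ⟨hvA, hvB⟩, -⟩ | ⟨u, v, huv, hu, hv, -⟩
  · exact Or.inl ⟨v, hvA, hvB⟩
  · rcases hu with hu | hu <;> rcases hv with hv | hv
    · exact Or.inl ⟨u, hu, hv⟩
    · exact Or.inr ⟨u, hu, v, hv, huv⟩
    · exact Or.inr ⟨v, hu, u, hv, huv.symm⟩
    · exact Or.inl ⟨v, hu, hv⟩

def brambleTangle (G : SimpleGraph V) (𝓑 : Set (Set V)) (k : ℕ) : Set (Set V) :=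
  {C | ∃ X : Set V, X.ncard < k ∧ ∃ A ∈ 𝓑, Disjoint A X ∧ ∃ v ∈ A, C = comp G X v}

variable {𝓑 : Set (Set V)} {k : ℕ}

lemma IsBramble.subset_comp (h𝓑 : IsBramble G 𝓑) {A B X : Set V} {v : V} (hA : A ∈ 𝓑)
    (hB : B ∈ 𝓑) (hAX : Disjoint A X) (hBX : Disjoint B X) (hv : v ∈ A) : B ⊆ comp G X v :=
  subset_comp_of_touches (h𝓑.1 A hA) (h𝓑.1 B hB) hAX hBX (h𝓑.2 A hA B hB) hv

lemma isTangle_brambleTangle (h𝓑 : IsBramble G 𝓑) (hk : 2 * k ≤ brambleOrder 𝓑 + 1) :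
    IsTangle G (brambleTangle G 𝓑 k) := by
  refine ⟨fun _ ⟨_, _, _, _, _, _, _, hC⟩ => hC ▸ induce_comp_connected, ?_⟩
  rintro _ ⟨X, hX, A₁, hA₁, hA₁X, v₁, hv₁, rfl⟩ _ ⟨Y, hY, A₂, hA₂, hA₂Y, v₂, hv₂, rfl⟩
    _ ⟨Z, hZ, A₃, hA₃, hA₃Z, v₃, hv₃, rfl⟩
  obtain ⟨B₁, hB₁, hB₁XY⟩ := exists_disjoint_of_ncard_lt_brambleOrder (𝓑 := 𝓑) (S := X ∪ Y)
    (by have := Set.ncard_union_le X Y; omega)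
  obtain ⟨B₂, hB₂, hB₂Z⟩ := exists_disjoint_of_ncard_lt_brambleOrder (𝓑 := 𝓑) (S := Z)
    (by omega)
  rw [Set.disjoint_union_right] at hB₁XY
  have h₁ := h𝓑.subset_comp hA₁ hB₁ hA₁X hB₁XY.1 hv₁
  have h₂ := h𝓑.subset_comp hA₂ hB₁ hA₂Y hB₁XY.2 hv₂
  have h₃ := h𝓑.subset_comp hA₃ hB₂ hA₃Z hB₂Z hv₃
  rcases h𝓑.2 B₁ hB₁ B₂ hB₂ with ⟨u, hu₁, hu₂⟩ | ⟨a, ha, b, hb, hab⟩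
  · exact Or.inl ⟨u, ⟨h₁ hu₁, h₂ hu₁⟩, h₃ hu₂⟩
  · exact Or.inr ⟨a, b, hab, Or.inl (h₁ ha), Or.inl (h₂ ha), Or.inr (h₃ hb)⟩

lemma le_brambleOrder_brambleTangle (h𝓑 : IsBramble G 𝓑) (hk : k ≤ brambleOrder 𝓑) :
    k ≤ brambleOrder (brambleTangle G 𝓑 k) := by
  have huniv : IsHitting (brambleTangle G 𝓑 k) Set.univ := by
    rintro _ ⟨X, -, -, -, -, v, -, rfl⟩
    exact ⟨v, Set.mem_univ v, mem_comp_self⟩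
  refine le_brambleOrder huniv fun S hS => ?_
  by_contra! hSk
  obtain ⟨A, hA, hAS⟩ := exists_disjoint_of_ncard_lt_brambleOrder (hSk.trans_le hk)
  obtain ⟨v, hv⟩ := (h𝓑.1 A hA).nonempty
  obtain ⟨u, huS, huC⟩ := hS _ ⟨S, hSk, A, hA, hAS, v, hv, rfl⟩
  exact notMem_of_mem_comp (Set.disjoint_left.mp hAS hv) huC huS

end Tangle

section Numbers

variable {V : Type*} [Finite V] (G : SimpleGraph V)

lemma tangleNumber_le_brambleNumber : tangleNumber G ≤ brambleNumber G :=
  csSup_le_csSup (bddAbove_brambleOrder _) ⟨0, ∅, isTangle_empty, brambleOrder_empty⟩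
    fun _ ⟨τ, hτ, hn⟩ => ⟨τ, hτ.isBramble, hn⟩

lemma brambleNumber_le_two_mul_tangleNumber : brambleNumber G ≤ 2 * tangleNumber G := by
  obtain ⟨𝓑, h𝓑, hb⟩ : brambleNumber G ∈ {n | ∃ 𝓑, IsBramble G 𝓑 ∧ brambleOrder 𝓑 = n} :=
    Nat.sSup_mem ⟨0, ∅, isTangle_empty.isBramble, brambleOrder_empty⟩ (bddAbove_brambleOrder _)
  set k := (brambleNumber G + 1) / 2
  have hτ : IsTangle G (brambleTangle G 𝓑 k) := isTangle_brambleTangle h𝓑 (by omega)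
  have hk : k ≤ tangleNumber G :=
    (le_brambleOrder_brambleTangle h𝓑 (by omega)).trans
      (le_csSup (bddAbove_brambleOrder _) ⟨_, hτ, rfl⟩)
  omega

end Numbers

/-- tn(G) ≤ bn(G) ≤ 2·tn(G). -/
theorem tangle_bramble_bounds {V : Type} [Fintype V] (G : SimpleGraph V) :
    tangleNumber G ≤ brambleNumber G ∧ brambleNumber G ≤ 2 * tangleNumber G :=
  ⟨tangleNumber_le_brambleNumber G, brambleNumber_le_two_mul_tangleNumber G⟩

end TWPaper
end

section
/- For every graph G with branchwidth at least 2, tw(G) + 1 <= (3/2)·bw(G). -/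
open SimpleGraph

namespace SimpleGraph

variable {V : Type*} {G : SimpleGraph V} {u w x : V}

lemma Walk.IsPath.exists_ne_of_mem_support {p : G.Walk u w} (hp : p.IsPath)
    (hx : x ∈ p.support) (hxu : x ≠ u) (hxw : x ≠ w) :
    ∃ a b, a ≠ b ∧ s(a, x) ∈ p.edges ∧ s(x, b) ∈ p.edges := by
  classical
  have hq : ¬ (p.takeUntil x hx).Nil := Walk.not_nil_of_ne hxu.symm
  have hq' : ¬ (p.dropUntil x hx).Nil := Walk.not_nil_of_ne hxw
  have hedges : p.edges = (p.takeUntil x hx).edges ++ (p.dropUntil x hx).edges := by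
    rw [← Walk.edges_append, Walk.take_spec]
  have hin := Walk.mk_penultimate_end_mem_edges hq
  have hout := Walk.mk_start_snd_mem_edges hq'
  refine ⟨_, _, fun hab => ?_, hedges ▸ List.mem_append_left _ hin,
    hedges ▸ List.mem_append_right _ hout⟩
  have hnodup := hp.isTrail.edges_nodup
  rw [hedges, List.nodup_append] at hnodup
  exact hnodup.2.2 _ hin _ hout (by rw [hab, Sym2.eq_swap])

lemma IsAcyclic.not_reachable_deleteEdges_of_mem_edges (hG : G.IsAcyclic) {p : G.Walk u w}
    (hp : p.IsPath) {e : Sym2 V} (he : e ∈ p.edges) : ¬ (G.deleteEdges {e}).Reachable u w := by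
  classical
  induction e using Sym2.ind with
  | _ a b =>
    rw [reachable_deleteEdges_iff_exists_walk]
    rintro ⟨q, hq⟩
    have hpq : q.toPath = ⟨p, hp⟩ := (hG.subsingleton_path u w).elim _ _
    exact hq (Walk.edges_toPath_subset_edges q (by rw [hpq]; exact he))

variable {ι : Type*} {T : SimpleGraph ι}

lemma Connected.induce_image {T' : SimpleGraph V} (f : T →g T') {s : Set ι}
    (h : (T.induce s).Connected) : (T'.induce (f '' s)).Connected :=
  h.map ⟨fun x : s => ⟨f x, x.1, x.2, rfl⟩, fun hxy => f.map_rel hxy⟩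
    (by rintro ⟨_, x, hx, rfl⟩; exact ⟨⟨x, hx⟩, rfl⟩)

end SimpleGraph

namespace TWPaper

section AttachLeaves

variable {ι W : Type*}

def attachLeaves (T : SimpleGraph ι) (r : ι) (W : Type*) : SimpleGraph (ι ⊕ W) where
  Adj
    | .inl a, .inl b => T.Adj a b
    | .inl a, .inr _ => a = r
    | .inr _, .inl b => b = r
    | .inr _, .inr _ => False
  symm := by constructor; rintro (a | a) (b | b) h <;> first | exact h.symm | exact h
  loopless := by constructor; rintro (a | a) h <;> first | exact T.loopless.irrefl a h | exact h

variable {T : SimpleGraph ι} {r : ι}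

lemma reachable_deleteEdges_of_attachLeaves {a b : ι} {n m : ι ⊕ W}
    (h : ((attachLeaves T r W).deleteEdges {s(.inl a, .inl b)}).Reachable n m) :
    (T.deleteEdges {s(a, b)}).Reachable (n.elim id fun _ => r) (m.elim id fun _ => r) := by
  rw [reachable_iff_reflTransGen] at h ⊢
  refine Relation.ReflTransGen.lift' _ ?_ _ _ h
  rintro (x | u) (y | u') ⟨hadj, hne⟩
  · refine .single ⟨hadj, fun hxy => hne ?_⟩
    simpa [fromEdgeSet_adj, Sym2.eq_iff] using hxy
  · exact (show x = r from hadj) ▸ .refl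
  · exact (show y = r from hadj) ▸ .refl
  · exact hadj.elim

lemma isTree_attachLeaves (hT : T.IsTree) (r : ι) : (attachLeaves T r W).IsTree := by
  refine ⟨(connected_iff_exists_forall_reachable _).2 ⟨.inl r, ?_⟩, ?_⟩
  · rintro (x | u)
    · exact (hT.connected.preconnected r x).map ⟨Sum.inl, fun h => h⟩
    · exact Adj.reachable (G := attachLeaves T r W) (show r = r from rfl)
  refine isAcyclic_iff_forall_adj_isBridge.2 ?_
  rintro (a | u) (b | u') hadj
  · exact fun h => isAcyclic_iff_forall_adj_isBridge.1 hT.2 hadj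
      (reachable_deleteEdges_of_attachLeaves h)
  · obtain rfl : a = r := hadj
    refine not_reachable_of_neighborSet_right_eq_empty Sum.inl_ne_inr ?_
    ext (y | u'') <;> simp [attachLeaves, deleteEdges_adj]
  · obtain rfl : b = r := hadj
    refine not_reachable_of_neighborSet_left_eq_empty Sum.inr_ne_inl ?_
    ext (y | u'') <;> simp [attachLeaves, deleteEdges_adj]
  · exact hadj.elim

lemma isTreeDecomp_attachLeaves {V : Type*} {G : SimpleGraph V} (hT : T.IsTree) (r : ι)
    {B : ι → Set V} (hadj : ∀ v w, G.Adj v w → ∃ x, v ∈ B x ∧ w ∈ B x)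
    (hconn : ∀ v w, G.Adj v w → (T.induce {x | v ∈ B x}).Connected)
    (hsupp : ∀ x, ∀ v ∈ B x, ∃ w, G.Adj v w) :
    IsTreeDecomp G (attachLeaves T r V) (Sum.elim B fun u => {v | v = u ∧ ∀ w, ¬ G.Adj v w}) := by
  refine ⟨isTree_attachLeaves hT r, fun v w h => ?_, fun v => ?_⟩
  · obtain ⟨x, hx⟩ := hadj v w h
    exact ⟨.inl x, hx⟩
  by_cases hv : ∃ w, G.Adj v w
  · obtain ⟨w, hvw⟩ := hv
    have hnodes : {n | v ∈ Sum.elim B (fun u => {v | v = u ∧ ∀ w, ¬ G.Adj v w}) n} =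
        Sum.inl '' {x | v ∈ B x} := by
      ext (x | u)
      · simp
      · simpa using fun _ => ⟨w, hvw⟩
    rw [hnodes]
    exact (hconn v w hvw).induce_image ⟨Sum.inl, fun h => h⟩
  · push Not at hv
    have hnodes : {n | v ∈ Sum.elim B (fun u => {v | v = u ∧ ∀ w, ¬ G.Adj v w}) n} =
        {.inr v} := by
      ext (x | u)
      · simpa using fun hx => (hsupp x v hx).elim hv
      · simpa [eq_comm] using fun _ => hv
    rw [hnodes]
    exact .of_subsingleton

end AttachLeaves

section BranchBags

variable {V ι : Type*} (G : SimpleGraph V) (T : SimpleGraph ι) (ℓ : G.edgeSet → ι)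

def acrossSet (a b : ι) : Set V :=
  {v | ∃ e₁ e₂ : G.edgeSet, v ∈ e₁.1 ∧ v ∈ e₂.1 ∧
    ¬ (T.deleteEdges {s(a, b)}).Reachable (ℓ e₁) (ℓ e₂)}

def branchBag (x : ι) : Set V :=
  {v | ∃ e₁ e₂ : G.edgeSet, v ∈ e₁.1 ∧ v ∈ e₂.1 ∧
    ∃ p : T.Walk (ℓ e₁) (ℓ e₂), p.IsPath ∧ x ∈ p.support}

variable {G T ℓ}

lemma exists_adj_of_mem_branchBag {x : ι} {v : V} (hv : v ∈ branchBag G T ℓ x) :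
    ∃ w, G.Adj v w := by
  obtain ⟨e, -, hve, -⟩ := hv
  exact ⟨Sym2.Mem.other hve, by rw [← mem_edgeSet, Sym2.other_spec]; exact e.2⟩

lemma mem_branchBag_of_mem {e : G.edgeSet} {v : V} (hv : v ∈ e.1) : v ∈ branchBag G T ℓ (ℓ e) :=
  ⟨e, e, hv, hv, .nil, .nil, Walk.start_mem_support _⟩

lemma connected_induce_branchBag (hT : T.Connected) {v w : V} (hvw : G.Adj v w) :
    (T.induce {x | v ∈ branchBag G T ℓ x}).Connected := by
  classical
  let e₀ : G.edgeSet := ⟨s(v, w), hvw⟩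
  have hv₀ : v ∈ e₀.1 := Sym2.mem_mk_left v w
  refine induce_connected_of_patches (ℓ e₀) (mem_branchBag_of_mem hv₀) fun {x} hx => ?_
  obtain ⟨e₁, e₂, hv₁, hv₂, p, hp, hxp⟩ := hx
  let p₀ := (hT.preconnected (ℓ e₀) (ℓ e₁)).some.toPath
  let q := p₀.1.append p
  refine ⟨{z | z ∈ q.support}, fun z hz => ?_, q.start_mem_support,
    (Walk.mem_support_append_iff _ _).2 (.inr hxp), q.connected_induce_support.preconnected _ _⟩
  rcases (Walk.mem_support_append_iff _ _).1 hz with hz | hz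
  · exact ⟨e₀, e₁, hv₀, hv₁, p₀.1, p₀.2, hz⟩
  · exact ⟨e₁, e₂, hv₁, hv₂, p, hp, hz⟩

lemma exists_eq_of_mem_branchBag_of_neighborSet_eq {x y : ι} (hx : T.neighborSet x = {y})
    {v : V} (hv : v ∈ branchBag G T ℓ x) : ∃ e : G.edgeSet, ℓ e = x ∧ v ∈ e.1 := by
  obtain ⟨e₁, e₂, hv₁, hv₂, p, hp, hxp⟩ := hv
  by_cases h₁ : x = ℓ e₁
  · exact ⟨e₁, h₁.symm, hv₁⟩
  by_cases h₂ : x = ℓ e₂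
  · exact ⟨e₂, h₂.symm, hv₂⟩
  obtain ⟨a, b, hab, ha, hb⟩ := hp.exists_ne_of_mem_support hxp h₁ h₂
  have ha' : a ∈ T.neighborSet x := (p.adj_of_mem_edges ha).symm
  have hb' : b ∈ T.neighborSet x := p.adj_of_mem_edges hb
  rw [hx] at ha' hb'
  exact (hab (ha'.trans hb'.symm)).elim

lemma exists_mem_acrossSet_of_mem_branchBag (hT : T.IsAcyclic) {x : ι} (hx : ∀ e, ℓ e ≠ x)
    {v : V} (hv : v ∈ branchBag G T ℓ x) :
    ∃ a b, a ≠ b ∧ T.Adj x a ∧ T.Adj x b ∧ v ∈ acrossSet G T ℓ x a ∧ v ∈ acrossSet G T ℓ x b := by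
  obtain ⟨e₁, e₂, hv₁, hv₂, p, hp, hxp⟩ := hv
  obtain ⟨a, b, hab, ha, hb⟩ := hp.exists_ne_of_mem_support hxp (hx e₁).symm (hx e₂).symm
  rw [Sym2.eq_swap] at ha
  exact ⟨a, b, hab, p.adj_of_mem_edges ha, p.adj_of_mem_edges hb,
    ⟨e₁, e₂, hv₁, hv₂, hT.not_reachable_deleteEdges_of_mem_edges hp ha⟩,
    ⟨e₁, e₂, hv₁, hv₂, hT.not_reachable_deleteEdges_of_mem_edges hp hb⟩⟩

lemma ncard_branchBag_le_two (hℓ : Function.Injective ℓ) {x : ι}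
    (hx : (T.neighborSet x).ncard = 1) : (branchBag G T ℓ x).ncard ≤ 2 := by
  classical
  obtain ⟨y, hy⟩ := Set.ncard_eq_one.1 hx
  rcases (branchBag G T ℓ x).eq_empty_or_nonempty with h | ⟨v₀, hv₀⟩
  · simp [h]
  obtain ⟨e₀, he₀, -⟩ := exists_eq_of_mem_branchBag_of_neighborSet_eq hy hv₀
  have hsub : branchBag G T ℓ x ⊆ ↑e₀.1.toFinset := fun v hv => by
    obtain ⟨e, he, hve⟩ := exists_eq_of_mem_branchBag_of_neighborSet_eq hy hv
    rw [hℓ (he.trans he₀.symm)] at hve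
    exact Sym2.mem_toFinset.2 hve
  calc (branchBag G T ℓ x).ncard ≤ (e₀.1.toFinset : Set V).ncard := Set.ncard_le_ncard hsub
    _ = 2 := by
      rw [Set.ncard_coe_finset,
        Sym2.card_toFinset_of_not_isDiag _ (G.not_isDiag_of_mem_edgeSet e₀.2)]

lemma ncard_branchBag_mul_two_le [Finite V] [Finite ι] (hT : T.IsAcyclic) {x : ι}
    (hx : ∀ e, ℓ e ≠ x) {w : ℕ} (hw : ∀ y, T.Adj x y → (acrossSet G T ℓ x y).ncard ≤ w) :
    (branchBag G T ℓ x).ncard * 2 ≤ (T.neighborSet x).ncard * w := by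
  classical
  have hB := Set.toFinite (branchBag G T ℓ x)
  have hN := Set.toFinite (T.neighborSet x)
  rw [Set.ncard_eq_toFinset_card _ hB, Set.ncard_eq_toFinset_card _ hN]
  refine Finset.card_mul_le_card_mul (fun v y => v ∈ acrossSet G T ℓ x y) (fun v hv => ?_)
    (fun y hy => ?_)
  · obtain ⟨a, b, hab, ha, hb, hva, hvb⟩ :=
      exists_mem_acrossSet_of_mem_branchBag hT hx (hB.mem_toFinset.1 hv)
    calc 2 = ({a, b} : Finset ι).card := (Finset.card_pair hab).symm
      _ ≤ _ := Finset.card_le_card fun z hz => by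
        rcases Finset.mem_insert.1 hz with rfl | hz
        · exact (Finset.mem_bipartiteAbove _).2 ⟨hN.mem_toFinset.2 ha, hva⟩
        · rw [Finset.mem_singleton.1 hz]
          exact (Finset.mem_bipartiteAbove _).2 ⟨hN.mem_toFinset.2 hb, hvb⟩
  · calc _ ≤ (acrossSet G T ℓ x y).ncard := by
          rw [← Set.ncard_coe_finset]
          exact Set.ncard_le_ncard fun v hv => ((Finset.mem_bipartiteBelow _).1 hv).2
      _ ≤ w := hw y (hN.mem_toFinset.1 hy)

lemma two_mul_ncard_branchBag_le [Finite V] [Finite ι] (hT : T.IsAcyclic)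
    (hℓ : Function.Injective ℓ) (hleaf : ∀ e, (T.neighborSet (ℓ e)).ncard = 1) {x : ι}
    (hx : (T.neighborSet x).ncard = 3 ∨ (T.neighborSet x).ncard = 1) {w : ℕ} (hw : 2 ≤ w)
    (hwidth : ∀ y, T.Adj x y → (acrossSet G T ℓ x y).ncard ≤ w) :
    2 * (branchBag G T ℓ x).ncard ≤ 3 * w := by
  rcases hx with h3 | h1
  · have hx : ∀ e, ℓ e ≠ x := fun e he => by
      have := hleaf e
      rw [he, h3] at this
      omega
    have := ncard_branchBag_mul_two_le hT hx hwidth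
    rw [h3] at this
    omega
  · have := ncard_branchBag_le_two hℓ h1
    omega

end BranchBags

lemma hasTDWidthLE_of_hasBDWidthLE {V : Type} [Finite V] {G : SimpleGraph V} {w : ℕ}
    (hw : 2 ≤ w) (h : HasBDWidthLE G w) : HasTDWidthLE G (3 * w / 2 - 1) := by
  obtain ⟨ι, hι, T, hT, hdeg, θ, hwidth⟩ := h
  let ℓ : G.edgeSet → ι := fun e => (θ e).1
  obtain ⟨r⟩ := hT.connected.nonempty
  refine ⟨ι ⊕ V, attachLeaves T r V, _, isTreeDecomp_attachLeaves hT r (B := branchBag G T ℓ)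
    (fun v w hvw => ⟨ℓ ⟨s(v, w), hvw⟩, mem_branchBag_of_mem (Sym2.mem_mk_left v w),
      mem_branchBag_of_mem (Sym2.mem_mk_right v w)⟩)
    (fun v w hvw => connected_induce_branchBag hT.connected hvw)
    (fun x v hv => exists_adj_of_mem_branchBag hv), ?_⟩
  rintro (x | u)
  · have := two_mul_ncard_branchBag_le (ℓ := ℓ) hT.isAcyclic
      (Subtype.val_injective.comp θ.injective) (fun e => (θ e).2) (hdeg x) hw (hwidth x)
    simp only [Sum.elim_inl]
    omega
  · have : {v | v = u ∧ ∀ w, ¬ G.Adj v w}.ncard ≤ 1 :=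
      (Set.ncard_le_ncard fun v (hv : v = u ∧ _) => hv.1).trans (Set.ncard_singleton u).le
    simp only [Sum.elim_inr]
    omega

/-- if bw(G) ≥ 2 then tw(G) + 1 ≤ (3/2)·bw(G). -/
theorem treewidth_le_branchwidth {V : Type} [Fintype V] (G : SimpleGraph V)
    (h : 2 ≤ branchwidth G) :
    2 * (treewidth G + 1) ≤ 3 * branchwidth G := by
  have hbd : HasBDWidthLE G (branchwidth G) :=
    Nat.sInf_mem (Nat.nonempty_of_pos_sInf (show 0 < branchwidth G by omega))
  have htw : treewidth G ≤ 3 * branchwidth G / 2 - 1 :=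
    Nat.sInf_le (hasTDWidthLE_of_hasBDWidthLE h hbd)
  omega

end TWPaper
end

section
/- For every graph G, ltp(G) - 1 <= tw(G) <= 2·ltp(G) - 1, where ltp(G) is the minimum k such that G is a minor of T[K_k] for some tree T. -/
/-!
A tree decomposition `(T, B)` with bags of size at most `k` gives a model of `G` in `T[K_k]`:
number every bag injectively by `Fin k` and let the branch set of `v` consist of the pairs
`(x, number of v in B x)` with `v ∈ B x`. Conversely, from a model of `G` in `T[K_k]`, root `T`
and put into the bag of a node `x` every vertex whose branch set meets the fibre of `x` or of
its parent. Every edge of `T` joins a node to its parent, so this is a tree decomposition, and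
since disjoint branch sets meet a fibre `K_k` in at most `k` vertices, its bags have size at
most `2k`.
-/

open SimpleGraph

namespace SimpleGraph

variable {V W : Type*} {G : SimpleGraph V} {H : SimpleGraph W}

lemma Connected.induce_range (hG : G.Connected) (φ : V → W)
    (hφ : ∀ ⦃a b⦄, G.Adj a b → φ a = φ b ∨ H.Adj (φ a) (φ b)) :
    (H.induce (Set.range φ)).Connected := by
  have : Nonempty (Set.range φ) := ⟨Set.rangeFactorization φ hG.nonempty.some⟩
  refine ⟨?_⟩
  rintro ⟨_, a, rfl⟩ ⟨_, b, rfl⟩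
  rw [reachable_iff_reflTransGen]
  refine Relation.ReflTransGen.lift' (Set.rangeFactorization φ) (fun x y hxy => ?_) a b
    ((reachable_iff_reflTransGen a b).mp (hG.preconnected a b))
  rcases hφ hxy with heq | hadj
  · rw [Function.onFun, show Set.rangeFactorization φ x = Set.rangeFactorization φ y from
      Subtype.ext heq]
  · exact .single hadj

lemma IsTree.exists_parent (hG : G.IsTree) :
    ∃ p : V → V, (∀ x, p x = x ∨ G.Adj (p x) x) ∧ ∀ a b, G.Adj a b → p b = a ∨ p a = b := by
  obtain ⟨r⟩ := hG.connected.nonempty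
  choose q hq using fun x => (hG.existsUnique_path r x).exists
  refine ⟨fun x => (q x).penultimate, fun x => ?_, fun a b hab => ?_⟩
  · by_cases hnil : (q x).Nil
    · left
      show (q x).penultimate = x
      obtain rfl := hnil.eq
      rw [hnil.eq_nil]
      rfl
    · exact .inr ((q x).adj_penultimate hnil)
  · by_cases ha : a ∈ (q b).support
    · left
      show (q b).penultimate = a
      rw [hG.isAcyclic.path_concat (hq a) (hq b) hab ha, Walk.penultimate_concat]
    · right
      show (q a).penultimate = b
      have hb := hG.isAcyclic.mem_support_of_ne_mem_support_of_adj_of_isPath (hq a) (hq b) hab ha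
      rw [hG.isAcyclic.path_concat (hq b) (hq a) hab.symm hb, Walk.penultimate_concat]

lemma connected_induce_union_preimage {p : V → V} (hp : ∀ x, p x = x ∨ G.Adj (p x) x)
    {s : Set V} (hs : (G.induce s).Connected) :
    (G.induce {x | x ∈ s ∨ p x ∈ s}).Connected := by
  obtain ⟨⟨u, hu⟩⟩ := hs.nonempty
  refine induce_connected_of_patches u (Or.inl hu) fun {x} hx => ?_
  have hxs : x ∈ s ∨ (p x ∈ s ∧ G.Adj (p x) x) := by
    rcases hx with hx | hx
    · exact .inl hx
    · rcases hp x with h | h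
      · exact .inl (h ▸ hx)
      · exact .inr ⟨hx, h⟩
  rcases hxs with hx | ⟨hpx, hadj⟩
  · exact ⟨s, fun y hy => Or.inl hy, hu, hx, hs.preconnected _ _⟩
  · have hconn := connected_induce_union hs.preconnected
      (Preconnected.of_subsingleton (V := ({x} : Set V))) hpx (Set.mem_singleton x) hadj
    refine ⟨s ∪ {x}, ?_, .inl hu, .inr rfl, hconn.preconnected _ _⟩
    rintro y (hy | rfl)
    · exact .inl hy
    · exact hx

end SimpleGraph

namespace TWPaper

section

variable {V : Type*} {G : SimpleGraph V} {k : ℕ}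

variable (G) in
lemma hasTDWidthLE_natCard [Finite V] : HasTDWidthLE G (Nat.card V) := by
  refine ⟨PUnit, ⊥, fun _ => Set.univ, ⟨.of_subsingleton, fun _ _ _ => ⟨⟨⟩, trivial, trivial⟩,
    fun v => ?_⟩, fun _ => by rw [Set.ncard_univ]; omega⟩
  have : Nonempty {x : PUnit | v ∈ Set.univ} := ⟨⟨⟨⟩, trivial⟩⟩
  exact .of_subsingleton

variable (G) in
lemma hasTDWidthLE_treewidth [Finite V] : HasTDWidthLE G (treewidth G) :=
  Nat.sInf_mem (s := {k | HasTDWidthLE G k}) ⟨_, hasTDWidthLE_natCard G⟩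

lemma IsTreeDecomp.isMinor_treeLex [Finite V] {ι : Type*} {T : SimpleGraph ι} {B : ι → Set V}
    (hTD : IsTreeDecomp G T B) (hB : ∀ x, (B x).ncard ≤ k) :
    IsMinor G (treeLex T k) := by
  obtain ⟨-, hedge, hconn⟩ := hTD
  let σ x : B x → Fin k := Fin.castLE (hB x) ∘ Finite.equivFin (B x)
  have hσ x : Function.Injective (σ x) :=
    (Fin.castLE_injective (hB x)).comp (Finite.equivFin (B x)).injective
  refine ⟨fun v => Set.range fun x : {x | v ∈ B x} => (x.1, σ x ⟨v, x.2⟩), fun v => ?_,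
    fun v w hvw => ?_, fun v w hvw => ?_⟩
  · exact (hconn v).induce_range _ fun _ _ hxy => .inr (.inl hxy)
  · rw [Set.disjoint_left]
    rintro _ ⟨⟨x, hx⟩, rfl⟩ ⟨⟨y, hy⟩, hxy⟩
    obtain ⟨rfl, hσxy⟩ := Prod.mk.inj hxy
    exact hvw (congrArg Subtype.val (hσ y hσxy)).symm
  · obtain ⟨x, hv, hw⟩ := hedge v w hvw
    exact ⟨_, ⟨⟨x, hv⟩, rfl⟩, _, ⟨⟨x, hw⟩, rfl⟩,
      .inr ⟨rfl, fun h => hvw.ne (congrArg Subtype.val (hσ x h))⟩⟩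

lemma ncard_setOf_mem_image_fst_le {ι κ : Type*} [Finite κ] {f : V → Set (ι × κ)}
    (hdisj : ∀ a b, a ≠ b → Disjoint (f a) (f b)) (y : ι) :
    {v | y ∈ Prod.fst '' f v}.ncard ≤ Nat.card κ := by
  rw [← Nat.card_coe_set_eq]
  refine Nat.card_le_card_of_injective (fun v => v.2.choose.2) fun v w hvw => ?_
  obtain ⟨hv, hvy⟩ := v.2.choose_spec
  obtain ⟨hw, hwy⟩ := w.2.choose_spec
  have hvw' : v.2.choose = w.2.choose := Prod.ext (hvy.trans hwy.symm) hvw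
  by_contra hne
  exact Set.disjoint_left.mp (hdisj v w fun h => hne (Subtype.ext h)) hv (hvw' ▸ hw)

lemma connected_induce_image_fst {ι : Type*} {T : SimpleGraph ι} {s : Set (ι × Fin k)}
    (hs : ((treeLex T k).induce s).Connected) :
    (T.induce (Prod.fst '' s)).Connected := by
  rw [Set.image_eq_range]
  exact hs.induce_range _ fun _ _ hab => hab.elim .inr fun h => .inl h.1

lemma hasTDWidthLE_of_isMinor_treeLex {ι : Type} {T : SimpleGraph ι} (hT : T.IsTree)
    (hm : IsMinor G (treeLex T k)) : HasTDWidthLE G (2 * k - 1) := by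
  obtain ⟨f, hconn, hdisj, hadj⟩ := hm
  obtain ⟨p, hp, hp_edge⟩ := hT.exists_parent
  let S v := Prod.fst '' f v
  refine ⟨ι, T, fun x => {v | x ∈ S v ∨ p x ∈ S v}, ⟨hT, fun v w hvw => ?_, fun v => ?_⟩,
    fun x => ?_⟩
  · obtain ⟨u, hu, u', hu', huu'⟩ := hadj v w hvw
    have hv : u.1 ∈ S v := Set.mem_image_of_mem _ hu
    have hw : u'.1 ∈ S w := Set.mem_image_of_mem _ hu'
    rcases huu' with hTadj | ⟨heq, -⟩
    · rcases hp_edge _ _ hTadj with h | h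
      · exact ⟨u'.1, .inr (h ▸ hv), .inl hw⟩
      · exact ⟨u.1, .inl hv, .inr (h ▸ hw)⟩
    · exact ⟨u.1, .inl hv, .inl (heq ▸ hw)⟩
  · exact connected_induce_union_preimage hp (connected_induce_image_fst (hconn v))
  · have hbound y : {v | y ∈ S v}.ncard ≤ k :=
      (ncard_setOf_mem_image_fst_le hdisj y).trans_eq (Nat.card_fin k)
    have hunion : {v | x ∈ S v ∨ p x ∈ S v}.ncard ≤ {v | x ∈ S v}.ncard + {v | p x ∈ S v}.ncard :=
      Set.ncard_union_le _ _
    have := hbound x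
    have := hbound (p x)
    show {v | x ∈ S v ∨ p x ∈ S v}.ncard ≤ 2 * k - 1 + 1
    omega

lemma HasTDWidthLE.exists_isMinor_treeLex [Finite V] (h : HasTDWidthLE G k) :
    ∃ (ι : Type) (T : SimpleGraph ι), T.IsTree ∧ IsMinor G (treeLex T (k + 1)) := by
  obtain ⟨ι, T, B, hTD, hB⟩ := h
  exact ⟨ι, T, hTD.1, hTD.isMinor_treeLex hB⟩

variable (G) in
lemma exists_isMinor_treeLex_ltp [Finite V] :
    ∃ (ι : Type) (T : SimpleGraph ι), T.IsTree ∧ IsMinor G (treeLex T (ltp G)) :=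
  Nat.sInf_mem (s := {k | ∃ (ι : Type) (T : SimpleGraph ι), T.IsTree ∧ IsMinor G (treeLex T k)})
    ⟨_, (hasTDWidthLE_natCard G).exists_isMinor_treeLex⟩

lemma ltp_le_of_hasTDWidthLE [Finite V] (h : HasTDWidthLE G k) : ltp G ≤ k + 1 :=
  Nat.sInf_le h.exists_isMinor_treeLex

lemma treewidth_le_of_hasTDWidthLE (h : HasTDWidthLE G k) : treewidth G ≤ k :=
  Nat.sInf_le h

end

/-- ltp(G) - 1 ≤ tw(G) ≤ 2·ltp(G) - 1. -/
theorem ltp_treewidth_bounds {V : Type} [Fintype V] (G : SimpleGraph V) :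
    ltp G - 1 ≤ treewidth G ∧ treewidth G ≤ 2 * ltp G - 1 := by
  obtain ⟨ι, T, hT, hm⟩ := exists_isMinor_treeLex_ltp G
  have hltp : ltp G ≤ treewidth G + 1 := ltp_le_of_hasTDWidthLE (hasTDWidthLE_treewidth G)
  exact ⟨by omega, treewidth_le_of_hasTDWidthLE (hasTDWidthLE_of_isMinor_treeLex hT hm)⟩

end TWPaper
end

section
/- A set S of vertices of a graph G is well-linked if and only if S is externally-well-linked. -/
open SimpleGraph

namespace TWPaper

/- Link `A ∪ C` to `B ∪ C` with `C = S \ (A ∪ B)`. Every vertex of `S` is then an endpoint of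
some path, so by disjointness a path meets `S` only at its own endpoints; and a path starting
in `A` cannot end in `C`, since it would have to be the trivial path at a vertex of `C`. -/
def IsLinkage {V : Type*} (G : SimpleGraph V) {A B : Finset V} (σ : A ≃ B)
    (p : ∀ a : A, G.Walk (a : V) (σ a : V)) : Prop :=
  (∀ a, (p a).IsPath) ∧ ∀ a a' : A, a ≠ a' → ∀ v, v ∈ (p a).support → v ∉ (p a').support

namespace IsLinkage

variable {V : Type*} {G : SimpleGraph V} {A B : Finset V} {σ : A ≃ B}
  {p : ∀ a : A, G.Walk (a : V) (σ a : V)}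

theorem eq_of_mem_support_of_mem_left (hp : IsLinkage G σ p) {a : A} {v : V}
    (hv : v ∈ (p a).support) (hvA : v ∈ A) : v = a := by
  by_contra hne
  exact hp.2 a ⟨v, hvA⟩ (fun h => hne (congrArg Subtype.val h).symm) v hv
    (p ⟨v, hvA⟩).start_mem_support

theorem eq_of_mem_support_of_mem_right (hp : IsLinkage G σ p) {a : A} {v : V}
    (hv : v ∈ (p a).support) (hvB : v ∈ B) : v = σ a := by
  have hσ : σ (σ.symm ⟨v, hvB⟩) = ⟨v, hvB⟩ := σ.apply_symm_apply _
  have hv' : v ∈ (p (σ.symm ⟨v, hvB⟩)).support := by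
    simpa only [hσ] using (p (σ.symm ⟨v, hvB⟩)).end_mem_support
  by_cases ha : a = σ.symm ⟨v, hvB⟩
  · rw [ha, hσ]
  · exact absurd hv' (hp.2 _ _ ha v hv)

theorem eq_or_eq_of_mem_support [DecidableEq V] (hp : IsLinkage G σ p) {a : A} {v : V}
    (hv : v ∈ (p a).support) (hvAB : v ∈ A ∪ B) : v = a ∨ v = σ a := by
  rcases Finset.mem_union.1 hvAB with hvA | hvB
  · exact Or.inl (hp.eq_of_mem_support_of_mem_left hv hvA)
  · exact Or.inr (hp.eq_of_mem_support_of_mem_right hv hvB)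

theorem apply_eq_of_apply_mem_left (hp : IsLinkage G σ p) {a : A} (ha : (σ a : V) ∈ A) :
    (σ a : V) = a :=
  hp.eq_of_mem_support_of_mem_left (p a).end_mem_support ha

theorem restrict {A' B' : Finset V} {σ' : A' ≃ B'} {p' : ∀ a : A', G.Walk (a : V) (σ' a : V)}
    (hp' : IsLinkage G σ' p') (hA : A ⊆ A') (hmaps : ∀ a : A', (a : V) ∈ A → (σ' a : V) ∈ B)
    (hcard : A.card = B.card) :
    ∃ (σ : A ≃ B) (p : ∀ a : A, G.Walk (a : V) (σ a : V)), IsLinkage G σ p ∧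
      ∀ a : A, (σ a : V) = σ' ⟨a, hA a.2⟩ ∧ (p a).support = (p' ⟨a, hA a.2⟩).support := by
  let f : A → B := fun a => ⟨σ' ⟨a, hA a.2⟩, hmaps _ a.2⟩
  have hf : Function.Injective f := by
    intro a b h
    have hσ' : (σ' ⟨a, hA a.2⟩ : V) = σ' ⟨b, hA b.2⟩ := congrArg (Subtype.val : B → V) h
    have hab : (⟨a, hA a.2⟩ : A') = ⟨b, hA b.2⟩ := σ'.injective (Subtype.ext hσ')
    exact Subtype.ext (congrArg Subtype.val hab :)
  have hfbij : Function.Bijective f :=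
    (Fintype.bijective_iff_injective_and_card f).2 ⟨hf, by simp only [Fintype.card_coe, hcard]⟩
  refine ⟨Equiv.ofBijective f hfbij, fun a => p' ⟨a, hA a.2⟩, ⟨fun a => hp'.1 _, ?_⟩,
    fun _ => ⟨rfl, rfl⟩⟩
  intro a b hab
  exact hp'.2 _ _ fun h => hab (Subtype.ext (congrArg Subtype.val h :))

end IsLinkage

theorem ExternallyWellLinked.wellLinked {V : Type*} {G : SimpleGraph V} {S : Set V}
    (h : ExternallyWellLinked G S) : WellLinked G S := fun A B hA hB hAB =>
  let ⟨σ, p, hpath, hdisj, _⟩ := h A B hA hB hAB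
  ⟨σ, p, hpath, hdisj⟩

/-- `S` is well-linked iff `S` is externally-well-linked. -/
theorem wellLinked_iff_externallyWellLinked {V : Type} [Fintype V]
    (G : SimpleGraph V) (S : Set V) :
    WellLinked G S ↔ ExternallyWellLinked G S := by
  classical
  refine ⟨fun hWL A B hA hB hAB => ?_, ExternallyWellLinked.wellLinked⟩
  set C := S.toFinset \ (A ∪ B)
  have hCS : ↑C ⊆ S := fun x hx => Set.mem_toFinset.1 (Finset.mem_sdiff.1 hx).1
  have hAC : Disjoint A C := Finset.disjoint_sdiff.mono_left Finset.subset_union_left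
  have hBC : Disjoint B C := Finset.disjoint_sdiff.mono_left Finset.subset_union_right
  obtain ⟨σ', p', hp'⟩ := hWL (A ∪ C) (B ∪ C)
    (by simpa only [Finset.coe_union] using Set.union_subset hA hCS)
    (by simpa only [Finset.coe_union] using Set.union_subset hB hCS)
    (by rw [Finset.card_union_of_disjoint hAC, Finset.card_union_of_disjoint hBC, hAB])
  replace hp' : IsLinkage G σ' p' := hp'
  have hmaps : ∀ a : ↥(A ∪ C), (a : V) ∈ A → (σ' a : V) ∈ B := fun a ha =>
    (Finset.mem_union.1 (σ' a).2).resolve_right fun hC =>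
      Finset.disjoint_left.1 hAC ha (hp'.apply_eq_of_apply_mem_left
        (Finset.mem_union_right _ hC) ▸ hC)
  obtain ⟨σ, p, hp, hsupp⟩ := hp'.restrict Finset.subset_union_left hmaps hAB
  refine ⟨σ, p, hp.1, hp.2, fun a v hv hvS => ?_⟩
  have hvS' : v ∈ (A ∪ C) ∪ (B ∪ C) := by
    simp only [C, Finset.mem_union, Finset.mem_sdiff, Set.mem_toFinset]
    tauto
  rw [(hsupp a).2] at hv
  rw [(hsupp a).1]
  exact hp'.eq_or_eq_of_mem_support hv hvS'

end TWPaper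
end

section
/- For every graph G, wl(G) <= 3·link(G): the maximum size of a well-linked set is at most three times the linkedness of G. -/
open SimpleGraph

namespace TWPaper

/-! If `X` has fewer than `⌈|S| / 3⌉` vertices and no component of `G - X` contains more than half
of `S`, the components can be grouped into a union `U` holding at least `|X| + 1` vertices of `S`
while leaving at least `|X| + 1` outside. Every path from `S ∩ U` to `S \ U` meets `X`, so
`|X| + 1` disjoint such paths, which well-linkedness of `S` provides, cannot exist. -/

open Finset in
/-- Take `U` of minimal size: removing the class of one of its elements leaves a saturated set,
which has at most `k` elements unless that class alone already has `k + 1`. -/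
theorem _root_.Finset.exists_saturated_subset {α : Type*} [DecidableEq α] {r : α → α → Prop}
    [DecidableRel r] (hr : Equivalence r) {T : Finset α} {k m : ℕ} (hk : k + 1 ≤ #T)
    (hm : ∀ a ∈ T, #{b ∈ T | r a b} ≤ m) :
    ∃ U ⊆ T, (∀ a ∈ U, ∀ b ∈ T, r a b → b ∈ U) ∧ k + 1 ≤ #U ∧ #U ≤ max m (2 * k) := by
  let IsSat (U : Finset α) : Prop := (∀ a ∈ U, ∀ b ∈ T, r a b → b ∈ U) ∧ k + 1 ≤ #U
  obtain ⟨U, hU, hmin⟩ := exists_min_image {U ∈ T.powerset | IsSat U} card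
    ⟨T, mem_filter.2 ⟨mem_powerset_self T, fun _ _ _ hb _ => hb, hk⟩⟩
  simp only [mem_filter, mem_powerset] at hU hmin
  obtain ⟨hUT, hUsat, hUcard⟩ := hU
  refine ⟨U, hUT, hUsat, hUcard, ?_⟩
  obtain ⟨a, ha⟩ : U.Nonempty := card_pos.1 (by omega)
  set C := {b ∈ T | r a b}
  have hCU : C ⊆ U := fun b hb => hUsat a ha b (mem_filter.1 hb).1 (mem_filter.1 hb).2
  have haC : a ∈ C := mem_filter.2 ⟨hUT ha, hr.refl a⟩
  by_cases hC : k + 1 ≤ #C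
  · have hCsat : IsSat C := ⟨fun b hb c hc hbc =>
      mem_filter.2 ⟨hc, hr.trans (mem_filter.1 hb).2 hbc⟩, hC⟩
    have := hmin C ⟨filter_subset _ _, hCsat⟩
    have : #C ≤ m := hm a (hUT ha)
    omega
  · have hUC : ∀ b ∈ U \ C, ∀ c ∈ T, r b c → c ∈ U \ C := by
      intro b hb c hc hbc
      rw [mem_sdiff] at hb ⊢
      refine ⟨hUsat b hb.1 c hc hbc, fun hcC => hb.2 (mem_filter.2 ⟨hUT hb.1, ?_⟩)⟩
      exact hr.trans (mem_filter.1 hcC).2 (hr.symm hbc)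
    have hcard : #(U \ C) = #U - #C := card_sdiff_of_subset hCU
    have hCpos : 0 < #C := card_pos.2 ⟨a, haC⟩
    have : #(U \ C) ≤ k := by
      by_contra! h
      have := hmin (U \ C) ⟨sdiff_subset.trans hUT, hUC, h⟩
      omega
    omega

theorem _root_.SimpleGraph.Walk.reachable_delVerts {V : Type*} {G : SimpleGraph V} {X : Set V}
    {a b : V} (p : G.Walk a b) (hp : ∀ v ∈ p.support, v ∉ X) :
    (delVerts G X).Reachable a b := by
  induction p with
  | nil => rfl
  | @cons u c b hadj p ih =>
    have huc : (delVerts G X).Adj u c := ⟨hadj, hp u (by simp), hp c (by simp)⟩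
    exact huc.reachable.trans (ih fun v hv => hp v (by simp [hv]))

section Linked

open Finset

variable {V : Type*} {G : SimpleGraph V}

/-- The easy direction of Menger's theorem inside a well-linked set. -/
theorem WellLinked.card_le_of_separates {S X : Set V} (hS : WellLinked G S) (hX : X.Finite)
    {A B : Finset V} (hA : ↑A ⊆ S) (hB : ↑B ⊆ S) (hAB : #A = #B)
    (hsep : ∀ a ∈ A, ∀ b ∈ B, ∀ p : G.Walk a b, ∃ v ∈ p.support, v ∈ X) :
    #A ≤ X.ncard := by
  obtain ⟨σ, p, -, hdisj⟩ := hS A B hA hB hAB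
  choose f hfp hfX using fun a : A => hsep a a.2 (σ a) (σ a).2 (p a)
  have hinj : Function.Injective fun a : A => (⟨f a, hfX a⟩ : X) := by
    intro a a' h
    by_contra hne
    have hfa : f a = f a' := congrArg Subtype.val h
    exact hdisj a a' hne _ (hfp a) (hfa ▸ hfp a')
  have := hX.to_subtype
  simpa [Nat.card_coe_set_eq] using Nat.card_le_card_of_injective _ hinj

theorem IsLinked.le_card [Finite V] {k : ℕ} {S : Set V} (h : IsLinked G k S) :
    k ≤ Nat.card V := by
  by_contra! hk
  obtain ⟨v, hv, -⟩ := h Set.univ (by rwa [Set.ncard_univ])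
  exact hv trivial

theorem le_linkedness [Finite V] {k : ℕ} (hk : 0 < k) {S : Set V} (h : IsLinked G k S) :
    k ≤ linkedness G :=
  le_csSup ⟨Nat.card V, fun _ ⟨_, _, h'⟩ => h'.le_card⟩ ⟨hk, S, h⟩

theorem WellLinked.isLinked [Finite V] {S : Set V} (hS : WellLinked G S) :
    IsLinked G ((S.ncard + 2) / 3) S := by
  classical
  intro X hX
  by_contra! hsmall
  obtain ⟨s, rfl⟩ := S.toFinite.exists_finset_coe
  obtain ⟨x, rfl⟩ := X.toFinite.exists_finset_coe
  simp only [Set.ncard_coe_finset] at hX hsmall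
  have hclass : ∀ a ∈ s \ x, #{b ∈ s \ x | (delVerts G x).Reachable a b} ≤ #s / 2 := by
    intro a ha
    have hsub : (({b ∈ s \ x | (delVerts G x).Reachable a b} : Finset V) : Set V) ⊆
        comp G x a ∩ s := fun b hb => ⟨(mem_filter.1 hb).2, (mem_sdiff.1 (mem_filter.1 hb).1).1⟩
    have := Set.ncard_le_ncard hsub
    have := hsmall a (mem_sdiff.1 ha).2
    rw [Set.ncard_coe_finset] at *
    omega
  have hsx : #x + 1 ≤ #(s \ x) := by
    have := le_card_sdiff x s
    omega
  obtain ⟨U, hUsx, hUsat, hUlo, hUhi⟩ :=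
    Finset.exists_saturated_subset (reachable_is_equivalence _) hsx hclass
  have hUs : U ⊆ s := hUsx.trans sdiff_subset
  obtain ⟨A, hAU, hA⟩ := exists_subset_card_eq hUlo
  obtain ⟨B, hBsU, hB⟩ := exists_subset_card_eq (s := s \ U) (n := #x + 1) (by
    rw [card_sdiff_of_subset hUs]
    omega)
  have hsep : ∀ a ∈ A, ∀ b ∈ B, ∀ p : G.Walk a b, ∃ v ∈ p.support, v ∈ (x : Set V) := by
    intro a ha b hb p
    by_contra! hp
    have hb' := mem_sdiff.1 (hBsU hb)
    exact hb'.2 (hUsat a (hAU ha) b (mem_sdiff.2 ⟨hb'.1, hp b p.end_mem_support⟩)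
      (p.reachable_delVerts hp))
  have := hS.card_le_of_separates x.finite_toSet (fun a ha => hUs (hAU ha))
    (fun b hb => (mem_sdiff.1 (hBsU hb)).1) (hA.trans hB.symm) hsep
  rw [Set.ncard_coe_finset] at this
  omega

end Linked

/-- wl(G) ≤ 3·link(G). -/
theorem wellLinkedNum_le_linkedness {V : Type} [Fintype V] (G : SimpleGraph V) :
    wellLinkedNum G ≤ 3 * linkedness G := by
  refine csSup_le' ?_
  rintro _ ⟨S, hS, rfl⟩
  rcases Nat.eq_zero_or_pos S.ncard with h | h
  · omega
  · have := le_linkedness (by omega) hS.isLinked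
    omega

end TWPaper
end
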